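/- Let P₀,…,Pᵢ,…,P_j,…,Pₘ,…,Pₙ be an ordered transformation sequence. If there exists a proof tree for a ground atom A and the program P_j, then there exists a P_j-consistent proof tree for A and P_j; in particular, any proof tree T for A and P_j for which ⟨σ(A), size(T)⟩ is minimal w.r.t. the lexicographic ordering is P_j-consistent. -/

import Mathlib

namespace CLPS

abbrev Vr := ℕ

inductive Trm (F : Type) : Type where
  | var : Vr → Trm F
  | fn : F → List (Trm F) → Trm F

variable {F D Pu : Type}

def Trm.eval (fi : F → List D → D) (v : Vr → D) : Trm F → D
  | .var x => v x
  | .fn f ts => fi f (ts.attach.map (fun t => Trm.eval fi v t.1))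
decreasing_by
  have h := List.sizeOf_lt_of_mem t.2
  simp only [Trm.fn.sizeOf_spec]
  omega

def Trm.subst (s : Vr → Trm F) : Trm F → Trm F
  | .var x => s x
  | .fn f ts => .fn f (ts.attach.map (fun t => Trm.subst s t.1))
decreasing_by
  have h := List.sizeOf_lt_of_mem t.2
  simp only [Trm.fn.sizeOf_spec]
  omega

inductive Trm.VarIn : Vr → Trm F → Prop where
  | var {x} : VarIn x (.var x)
  | fn {x f ts t} : t ∈ ts → VarIn x t → VarIn x (.fn f ts)

def Trm.fv (t : Trm F) : Set Vr := {x | t.VarIn x}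

theorem Trm.eval_congr (fi : F → List D → D) :
    ∀ (n : ℕ) (t : Trm F), sizeOf t ≤ n → ∀ (v w : Vr → D),
      (∀ x, t.VarIn x → v x = w x) → t.eval fi v = t.eval fi w := by
  intro n
  induction n with
  | zero =>
    intro t ht
    cases t <;> simp_all
  | succ n ih =>
    intro t ht v w hvw
    cases t with
    | var x => simpa [Trm.eval] using hvw x .var
    | fn f ts =>
      rw [Trm.eval, Trm.eval]
      congr 1
      refine List.map_congr_left ?_
      rintro ⟨t, htmem⟩ -
      have hsz : sizeOf t ≤ n := by
        have h1 := List.sizeOf_lt_of_mem htmem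
        have h2 : sizeOf (Trm.fn f ts) = 1 + sizeOf f + sizeOf ts := by
          simp [Trm.fn.sizeOf_spec]
        omega
      exact ih t hsz v w (fun x hx => hvw x (.fn htmem hx))

end CLPS

namespace CLPS

variable {F D Pu : Type}

/-- A constraint, represented by its satisfaction predicate on valuations (the
interpretation `𝒟` for the constraints is thereby fixed), together with the set of
its free variables; `supp` states that satisfaction only depends on the free
variables. -/
structure Constr (D : Type) : Type where
  sat : (Vr → D) → Prop
  fv : Set Vr
  supp : ∀ v w : Vr → D, (∀ x ∈ fv, v x = w x) → sat v → sat w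

/-- the always-true (empty) constraint -/
def Constr.tt : Constr D := ⟨fun _ => True, ∅, by intro _ _ _ h; exact h⟩

/-- conjunction of constraints -/
def Constr.conj (c d : Constr D) : Constr D where
  sat := fun v => c.sat v ∧ d.sat v
  fv := c.fv ∪ d.fv
  supp := by
    rintro v w h ⟨hc, hd⟩
    exact ⟨c.supp v w (fun x hx => h x (Set.mem_union_left _ hx)) hc,
      d.supp v w (fun x hx => h x (Set.mem_union_right _ hx)) hd⟩

/-- negation of a constraint -/
def Constr.neg (c : Constr D) : Constr D where
  sat := fun v => ¬ c.sat v
  fv := c.fv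
  supp := by
    intro v w h hn hs
    exact hn (c.supp w v (fun x hx => (h x hx).symm) hs)

/-- the constraint `t₁ = u₁ ∧ … ∧ tₙ = uₙ` between two lists of terms -/
def eqTrms (fi : F → List D → D) (as bs : List (Trm F)) : Constr D where
  sat := fun v => as.map (Trm.eval fi v) = bs.map (Trm.eval fi v)
  fv := {x | (∃ t ∈ as, t.VarIn x) ∨ (∃ t ∈ bs, t.VarIn x)}
  supp := by
    intro v w h hs
    have hmap : ∀ (ts : List (Trm F)),
        (∀ t ∈ ts, ∀ x, t.VarIn x → v x = w x) →
        ts.map (Trm.eval fi v) = ts.map (Trm.eval fi w) := by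
      intro ts hts
      refine List.map_congr_left ?_
      intro t ht
      exact Trm.eval_congr fi (sizeOf t) t le_rfl v w (hts t ht)
    rw [← hmap as fun t ht x hx => h x (Or.inl ⟨t, ht, hx⟩),
      ← hmap bs fun t ht x hx => h x (Or.inr ⟨t, ht, hx⟩)]
    exact hs

/-- application of a substitution to a constraint -/
def Constr.subst (fi : F → List D → D) (s : Vr → Trm F) (c : Constr D) : Constr D where
  sat := fun v => c.sat (fun x => (s x).eval fi v)
  fv := {y | ∃ x ∈ c.fv, (s x).VarIn y}
  supp := by
    intro v w h hs
    refine c.supp _ _ ?_ hs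
    intro x hx
    exact Trm.eval_congr fi _ (s x) le_rfl v w (fun y hy => h y ⟨x, hx, hy⟩)

/-- `∃Y c` : satisfaction of the existential quantification of the constraint `c`
over the set `Y` of variables -/
def existsOverSat (Y : Set Vr) (c : Constr D) (v : Vr → D) : Prop :=
  ∃ v' : Vr → D, (∀ x, x ∉ Y → v' x = v x) ∧ c.sat v'

end CLPS

namespace CLPS

variable {F D Pu : Type}

/-- An atom: a user-defined predicate symbol applied to a list of terms. -/
structure Atm (F Pu : Type) where
  pred : Pu
  args : List (Trm F)

/-- ground atoms (the base `B_𝒟`) -/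
abbrev GrAtm (Pu D : Type) := Pu × List D

/-- the ground atom `v(A)` -/
def Atm.eval (fi : F → List D → D) (v : Vr → D) (A : Atm F Pu) : GrAtm Pu D :=
  (A.pred, A.args.map (Trm.eval fi v))

/-- application of a substitution to an atom -/
def Atm.subst (s : Vr → Trm F) (A : Atm F Pu) : Atm F Pu :=
  ⟨A.pred, A.args.map (Trm.subst s)⟩

/-- the free variables of an atom -/
def Atm.fv (A : Atm F Pu) : Set Vr := {x | ∃ t ∈ A.args, t.VarIn x}

/-- a literal: a sign (`true` = positive, `false` = negative) and an atom -/
abbrev Lit (F Pu : Type) := Bool × Atm F Pu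

/-- a goal: a list of literals -/
abbrev Goal (F Pu : Type) := List (Lit F Pu)

/-- application of a substitution to a literal -/
def Lit.subst (s : Vr → Trm F) (l : Lit F Pu) : Lit F Pu := (l.1, l.2.subst s)

/-- application of a substitution to a goal -/
def Goal.subst (s : Vr → Trm F) (G : Goal F Pu) : Goal F Pu := G.map (Lit.subst s)

/-- the free variables of a goal -/
def Goal.fv (G : Goal F Pu) : Set Vr := {x | ∃ l ∈ G, x ∈ (l.2).fv}

/-- A clause `H ← c ∧ G` -/
structure Clse (F Pu D : Type) where
  head : Atm F Pu
  constr : Constr D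
  body : Goal F Pu

/-- the free variables of a clause -/
def Clse.fv (γ : Clse F Pu D) : Set Vr := γ.head.fv ∪ γ.constr.fv ∪ Goal.fv γ.body

/-- application of a substitution to a clause -/
def Clse.subst (fi : F → List D → D) (s : Vr → Trm F) (γ : Clse F Pu D) : Clse F Pu D :=
  ⟨γ.head.subst s, γ.constr.subst fi s, Goal.subst s γ.body⟩

/-- a constraint logic program: a set of clauses (finiteness is stated separately) -/
abbrev Prog (F Pu D : Type) := Set (Clse F Pu D)

/-- the substitution renaming variables according to `ρ` -/
def rsub (ρ : Vr ≃ Vr) : Vr → Trm F := fun x => Trm.var (ρ x)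

/-- the variant of a clause obtained by applying the renaming `ρ` -/
def Clse.rename (fi : F → List D → D) (ρ : Vr ≃ Vr) (γ : Clse F Pu D) : Clse F Pu D :=
  γ.subst fi (rsub ρ)

/-- the ground literal `v(L)` -/
def glit (fi : F → List D → D) (v : Vr → D) (l : Lit F Pu) : Bool × GrAtm Pu D :=
  (l.1, l.2.eval fi v)

/-- truth of a ground literal in a `D`-interpretation -/
def litTrue (I : Set (GrAtm Pu D)) (l : Bool × GrAtm Pu D) : Prop :=
  if l.1 then l.2 ∈ I else l.2 ∉ I

/-- `I` is a `D`-model of `P` -/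
def isModel (fi : F → List D → D) (I : Set (GrAtm Pu D)) (P : Prog F Pu D) : Prop :=
  ∀ γ ∈ P, ∀ v : Vr → D, γ.constr.sat v →
    (∀ l ∈ γ.body, litTrue I (glit fi v l)) → γ.head.eval fi v ∈ I

end CLPS

namespace CLPS

/-- `W` : the set of countable ordinals -/
abbrev W : Type 1 := {o : Ordinal.{0} // o < (Cardinal.aleph 1).ord}

theorem natW_lt (n : ℕ) : (n : Ordinal.{0}) < (Cardinal.aleph 1).ord := by
  refine Cardinal.lt_ord.mpr ?_
  simpa using (Cardinal.nat_lt_aleph0 n).trans Cardinal.aleph0_lt_aleph_one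

/-- natural numbers as countable ordinals -/
def natW (n : ℕ) : W := ⟨n, natW_lt n⟩

/-- the zero ordinal in `W` -/
def zeroW : W := natW 0

variable {F D Pu : Type}

/-- the ground instance `v(γ)` is locally stratified w.r.t. `σ` -/
def clauseLS (fi : F → List D → D) (σ : GrAtm Pu D → W) (γ : Clse F Pu D) : Prop :=
  ∀ v : Vr → D, γ.constr.sat v → ∀ l ∈ γ.body,
    (l.1 = true → σ (l.2.eval fi v) ≤ σ (γ.head.eval fi v)) ∧
    (l.1 = false → σ (l.2.eval fi v) < σ (γ.head.eval fi v))

/-- `P` is locally stratified w.r.t. `σ` -/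
def progLS (fi : F → List D → D) (σ : GrAtm Pu D → W) (P : Prog F Pu D) : Prop :=
  ∀ γ ∈ P, clauseLS fi σ γ

/-- `P` is locally stratified -/
def LocStrat (fi : F → List D → D) (P : Prog F Pu D) : Prop := ∃ σ, progLS fi σ P

/-- `I ≺ J` : `I` is preferable to `J` w.r.t. `σ` -/
def pref (σ : GrAtm Pu D → W) (I J : Set (GrAtm Pu D)) : Prop :=
  ∀ A₁ ∈ I \ J, ∃ A₂ ∈ J \ I, σ A₂ < σ A₁

/-- `M` is a perfect model of `P` w.r.t. `σ` -/
def PerfWrt (fi : F → List D → D) (σ : GrAtm Pu D → W) (P : Prog F Pu D)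
    (M : Set (GrAtm Pu D)) : Prop :=
  isModel fi M P ∧ ∀ N, isModel fi N P → N ≠ M → pref σ M N

/-- `M` is a perfect model of `P` -/
def IsPerf (fi : F → List D → D) (P : Prog F Pu D) (M : Set (GrAtm Pu D)) : Prop :=
  ∃ σ, progLS fi σ P ∧ PerfWrt fi σ P M

/-- the predicate `p` occurs in the goal `G` -/
def predInGoal (p : Pu) (G : Goal F Pu) : Prop := ∃ l ∈ G, (l.2).pred = p

/-- the predicate `p` occurs in the clause `γ` -/
def predInClause (p : Pu) (γ : Clse F Pu D) : Prop :=
  γ.head.pred = p ∨ predInGoal p γ.body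

/-- the predicate `p` occurs in the program `P` -/
def predInProg (p : Pu) (P : Prog F Pu D) : Prop := ∃ γ ∈ P, predInClause p γ

/-- `Def(p, P)` : the definition of the predicate `p` in `P` -/
def DefOf (p : Pu) (P : Prog F Pu D) : Prog F Pu D := {γ ∈ P | γ.head.pred = p}

/-- `p` immediately depends on `q` in `P` -/
def immDep (P : Prog F Pu D) (p q : Pu) : Prop :=
  ∃ γ ∈ P, γ.head.pred = p ∧ predInGoal q γ.body

/-- `p` depends on `q` in `P` -/
def dependsOn (P : Prog F Pu D) : Pu → Pu → Prop := Relation.TransGen (immDep P)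

end CLPS

namespace CLPS

variable {F D Pu : Type}

/-- the domain of a substitution -/
def sdom (s : Vr → Trm F) : Set Vr := {x | s x ≠ Trm.var x}

/-- the substitution is idempotent (no domain variable occurs in a range term)
and has finite domain -/
def Idempotent (s : Vr → Trm F) : Prop :=
  (sdom s).Finite ∧ ∀ x : Vr, ∀ y ∈ sdom s, ¬ (s x).VarIn y

/-- the substitution `{X/t}` -/
def singleSub (X : Vr) (t : Trm F) : Vr → Trm F :=
  fun y => if y = X then t else Trm.var y

/-! ### R1. Definition introduction -/

/-- **Rule R1 (definition introduction).** The clauses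
`δᵢ : newp(X₁,…,X_h) ← cᵢ ∧ Gᵢ` (`i = 1,…,m`, `m ≥ 1`) are added to `Pₖ`, where:
(i) `newp` does not occur in `P₀,…,Pₖ`; (ii) `X₁,…,X_h` are distinct variables
occurring in `FV({c₁ ∧ G₁,…,cₘ ∧ Gₘ})`; (iii) every predicate occurring in
`G₁,…,Gₘ` occurs in `P₀`; (iv) for every ground substitution `θ` with domain
`{X₁,…,X_h}`, `σ(newp(X₁,…,X_h)θ)` is the least ordinal `α` such that for every
valuation `v` and every `i`, either `𝒟 ⊭ v(cᵢθ)` or for every literal `L` of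
`v(Gᵢθ)`, `α ≥ σ(A)` if `L` is an atom `A` and `α > σ(A)` if `L` is `¬A`. -/
def DefIntroStep (fi : F → List D → D) (σ : GrAtm Pu D → W)
    (hist : ℕ → Prog F Pu D) (k : ℕ) (Dk : Prog F Pu D)
    (δs : List (Clse F Pu D)) (P P' D' : Prog F Pu D) : Prop :=
  δs ≠ [] ∧
  (∃ (newp : Pu) (xs : List Vr), xs.Nodup ∧
    (∀ δ ∈ δs, δ.head = ⟨newp, xs.map Trm.var⟩) ∧
    (∀ j ≤ k, ¬ predInProg newp (hist j)) ∧
    (∀ x ∈ xs, ∃ δ ∈ δs, x ∈ δ.constr.fv ∪ Goal.fv δ.body) ∧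
    (∀ δ ∈ δs, ∀ l ∈ δ.body, predInProg (l.2).pred (hist 0)) ∧
    (∀ d : Vr → D,
      IsLeast {α : W | ∀ w : Vr → D, (∀ x ∈ xs, w x = d x) → ∀ δ ∈ δs,
          δ.constr.sat w → ∀ l ∈ δ.body,
            (l.1 = true → σ (l.2.eval fi w) ≤ α) ∧
            (l.1 = false → σ (l.2.eval fi w) < α)}
        (σ (newp, (xs.map Trm.var).map (Trm.eval fi d))))) ∧
  P' = P ∪ {δ | δ ∈ δs} ∧ D' = Dk ∪ {δ | δ ∈ δs}

/-! ### R2. Definition elimination -/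

/-- **Rule R2 (definition elimination).** The definition of a predicate `p` on which
no predicate of the set `Pint` of predicates of interest depends is removed. -/
def DefElimStep (Pint : Set Pu) (p : Pu) (P P' : Prog F Pu D) : Prop :=
  (∀ q ∈ Pint, ¬ dependsOn P q p) ∧ P' = P \ DefOf p P

/-! ### R3. Positive unfolding -/

/-- **Rule R3 (positive unfolding).** The clause `γ : H ← c ∧ G_L ∧ A ∧ G_R ∈ Pₖ`
is replaced by the clauses `H ← c ∧ A = Kᵢ ∧ cᵢ ∧ G_L ∧ Bᵢ ∧ G_R`, one for each
clause `Kᵢ ← cᵢ ∧ Bᵢ` of a variant `P'ₖ` of `Pₖ` without common variables with `γ`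
such that `𝒟 ⊨ ∃(c ∧ A = Kᵢ ∧ cᵢ)`. -/
def PosUnfoldStep (fi : F → List D → D) (γ : Clse F Pu D) (P P' : Prog F Pu D) : Prop :=
  γ ∈ P ∧
  ∃ (H : Atm F Pu) (c : Constr D) (Gl Gr : Goal F Pu) (A : Atm F Pu),
    γ = ⟨H, c, Gl ++ (true, A) :: Gr⟩ ∧
    ∃ ρ : Vr ≃ Vr,
      (∀ δ ∈ P, ∀ x ∈ (Clse.rename fi ρ δ).fv, x ∉ γ.fv) ∧
      P' = (P \ {γ}) ∪
        {η | ∃ δ ∈ P,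
          (Clse.rename fi ρ δ).head.pred = A.pred ∧
          (∃ v : Vr → D,
            (c.conj ((eqTrms fi A.args (Clse.rename fi ρ δ).head.args).conj
              (Clse.rename fi ρ δ).constr)).sat v) ∧
          η = ⟨H, c.conj ((eqTrms fi A.args (Clse.rename fi ρ δ).head.args).conj
                  (Clse.rename fi ρ δ).constr),
                Gl ++ (Clse.rename fi ρ δ).body ++ Gr⟩}

end CLPS

namespace CLPS

variable {F D Pu : Type}

/-- conjunction of a constraint with a list of constraints -/
def conjWith (c : Constr D) (cs : List (Constr D)) : Constr D :=
  cs.foldl Constr.conj c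

/-! ### R4. Negative unfolding -/

/-- **Rule R4 (negative unfolding).** The clause `γ : H ← c ∧ G_L ∧ ¬A ∧ G_R ∈ Pₖ`
is unfolded w.r.t. `¬A`. Let `γᵢ : Kᵢ ← cᵢ ∧ Bᵢ` (`i = 1,…,m`) be all the clauses of
a variant `P'ₖ` of `Pₖ` (without common variables with `γ`) such that
`𝒟 ⊨ ∃(c ∧ A = Kᵢ ∧ cᵢ)`, and suppose that for each `i` there are an idempotent
substitution `θᵢ` and a constraint `dᵢ` such that
(i) `𝒟 ⊨ ∀(c → ((A = Kᵢ ∧ cᵢ) ↔ (X_{i1} = t_{i1} ∧ … ∧ X_{in} = t_{in} ∧ dᵢ)))`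
where `{X_{i1}/t_{i1},…}` are the bindings of `θᵢ`,
(ii) `dom(θᵢ) ⊆ FV(γᵢ)`, and (iii) `FV(dᵢ ∧ Bᵢθᵢ) ⊆ FV(c ∧ A)`.
Then `γ` is replaced by the clauses obtained by eliminating the existential
quantifiers, pushing `¬` inside, pushing `∨` outside, and removing the
unsatisfiable disjuncts: each resulting clause corresponds to a choice which, for
every `i`, either takes the constraint `¬dᵢ`, or takes the constraint `dᵢ` together
with the complement of one literal of `Bᵢθᵢ`. -/
def NegUnfoldStep (fi : F → List D → D) (γ : Clse F Pu D) (P P' : Prog F Pu D) : Prop :=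
  γ ∈ P ∧
  ∃ (H : Atm F Pu) (c : Constr D) (Gl Gr : Goal F Pu) (A : Atm F Pu),
    γ = ⟨H, c, Gl ++ (false, A) :: Gr⟩ ∧
    ∃ ρ : Vr ≃ Vr,
      (∀ δ ∈ P, ∀ x ∈ (Clse.rename fi ρ δ).fv, x ∉ γ.fv) ∧
      ∃ ms : List (Clse F Pu D × (Vr → Trm F) × Constr D),
        -- the clauses in `ms` are clauses of the variant of `Pₖ` for which the
        -- constraint `c ∧ A = Kᵢ ∧ cᵢ` is satisfiable, …
        (∀ e ∈ ms, (∃ δ ∈ P, e.1 = Clse.rename fi ρ δ) ∧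
          e.1.head.pred = A.pred ∧
          (∃ v : Vr → D, (c.conj ((eqTrms fi A.args e.1.head.args).conj e.1.constr)).sat v)) ∧
        -- … and they are all such clauses
        (∀ δ ∈ P, (Clse.rename fi ρ δ).head.pred = A.pred →
          (∃ v : Vr → D, (c.conj ((eqTrms fi A.args (Clse.rename fi ρ δ).head.args).conj
            (Clse.rename fi ρ δ).constr)).sat v) →
          ∃ e ∈ ms, e.1 = Clse.rename fi ρ δ) ∧
        -- conditions (i), (ii), (iii) on `θᵢ` and `dᵢ`
        (∀ e ∈ ms,
          Idempotent e.2.1 ∧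
          (∀ v : Vr → D, c.sat v →
            (((eqTrms fi A.args e.1.head.args).sat v ∧ e.1.constr.sat v) ↔
              ((∀ y ∈ sdom e.2.1, v y = (e.2.1 y).eval fi v) ∧ e.2.2.sat v))) ∧
          sdom e.2.1 ⊆ e.1.fv ∧
          (e.2.2.fv ∪ Goal.fv (Goal.subst e.2.1 e.1.body) ⊆ c.fv ∪ A.fv)) ∧
        P' = (P \ {γ}) ∪
          {η | ∃ picks : List (Constr D × Goal F Pu),
            List.Forall₂ (fun (e : Clse F Pu D × (Vr → Trm F) × Constr D)
                (pk : Constr D × Goal F Pu) =>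
              pk = (Constr.neg e.2.2, []) ∨
              ∃ l ∈ Goal.subst e.2.1 e.1.body, pk = (e.2.2, [(!l.1, l.2)]))
              ms picks ∧
            (∃ v : Vr → D, (conjWith c (picks.map Prod.fst)).sat v) ∧
            η = ⟨H, conjWith c (picks.map Prod.fst),
                  Gl ++ (picks.map Prod.snd).flatten ++ Gr⟩}

end CLPS

namespace CLPS

variable {F D Pu : Type}

/-! ### R5. Positive folding -/

/-- **Rule R5 (positive folding).** Let `δ₁,…,δₘ` (clauses of `Defsₖ`, whose
`ρ`-variant `Defs'ₖ` has no common variables with `γ₁,…,γₘ`) constitute the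
definition of a predicate, say with (renamed) head `K` and (renamed) body
`dᵢ ∧ Bᵢ` with `Bᵢ` non-empty; suppose there is a substitution `θ` such that, for
`i = 1,…,m`, `γᵢ = H ← c ∧ dᵢθ ∧ G_L ∧ Bᵢθ ∧ G_R`, and for every variable
`X ∈ FV(dᵢ ∧ Bᵢ) − FV(K)`: (i) `Xθ` is a variable not occurring in
`{H, c, G_L, G_R}`, and (ii) `Xθ` does not occur in `Yθ` for any variable
`Y ∈ FV(dᵢ ∧ Bᵢ)` different from `X`. Then `γ₁,…,γₘ` are replaced by
`H ← c ∧ G_L ∧ Kθ ∧ G_R`. -/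
def PosFoldStep (fi : F → List D → D) (Dk : Prog F Pu D)
    (γs δs : List (Clse F Pu D)) (P P' : Prog F Pu D) : Prop :=
  γs ≠ [] ∧ (∀ γ ∈ γs, γ ∈ P) ∧ (∀ δ ∈ δs, δ ∈ Dk) ∧
  ∃ ρ : Vr ≃ Vr,
    (∀ δ ∈ Dk, ∀ x ∈ (Clse.rename fi ρ δ).fv, ∀ γ ∈ γs, x ∉ γ.fv) ∧
    ∃ K : Atm F Pu,
      (∀ δ ∈ δs, (Clse.rename fi ρ δ).head = K) ∧
      (∀ δ ∈ δs, δ.head.pred = K.pred) ∧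
      (∀ δ₀ ∈ Dk, δ₀.head.pred = K.pred → δ₀ ∈ δs) ∧
      (∀ δ ∈ δs, δ.body ≠ []) ∧
      ∃ (θ : Vr → Trm F) (H : Atm F Pu) (c : Constr D) (Gl Gr : Goal F Pu),
        List.Forall₂ (fun γ δ =>
          γ = ⟨H, c.conj ((Clse.rename fi ρ δ).constr.subst fi θ),
                Gl ++ Goal.subst θ (Clse.rename fi ρ δ).body ++ Gr⟩) γs δs ∧
        (∀ δ ∈ δs, ∀ x,
          x ∈ (Clse.rename fi ρ δ).constr.fv ∪ Goal.fv (Clse.rename fi ρ δ).body →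
          x ∉ K.fv →
          ∃ x' : Vr, θ x = Trm.var x' ∧
            x' ∉ H.fv ∪ c.fv ∪ Goal.fv Gl ∪ Goal.fv Gr ∧
            ∀ y, y ∈ (Clse.rename fi ρ δ).constr.fv ∪
                Goal.fv (Clse.rename fi ρ δ).body →
              y ≠ x → ¬ (θ y).VarIn x') ∧
        P' = (P \ {γ | γ ∈ γs}) ∪ {⟨H, c, Gl ++ (true, K.subst θ) :: Gr⟩}

/-! ### R6. Negative folding -/

/-- **Rule R6 (negative folding).** Let `δ : K ← d ∧ A` be the unique clause of the
definition of a predicate in `Defsₖ` (whose `ρ`-variant has no common variables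
with `γ`), with `FV(K) = FV(d ∧ A)`; suppose there is a substitution `θ` such that
`γ = H ← c ∧ dθ ∧ G_L ∧ ¬Aθ ∧ G_R`. Then `γ` is replaced by
`H ← c ∧ dθ ∧ G_L ∧ ¬Kθ ∧ G_R`. -/
def NegFoldStep (fi : F → List D → D) (Dk : Prog F Pu D)
    (γ δ : Clse F Pu D) (P P' : Prog F Pu D) : Prop :=
  γ ∈ P ∧ δ ∈ Dk ∧
  ∃ ρ : Vr ≃ Vr,
    (∀ δ₀ ∈ Dk, ∀ x ∈ (Clse.rename fi ρ δ₀).fv, x ∉ γ.fv) ∧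
    ∃ (K A : Atm F Pu) (d : Constr D),
      Clse.rename fi ρ δ = ⟨K, d, [(true, A)]⟩ ∧
      (∀ δ₀ ∈ Dk, δ₀.head.pred = δ.head.pred → δ₀ = δ) ∧
      K.fv = d.fv ∪ A.fv ∧
      ∃ (θ : Vr → Trm F) (H : Atm F Pu) (c : Constr D) (Gl Gr : Goal F Pu),
        γ = ⟨H, c.conj (d.subst fi θ), Gl ++ (false, A.subst θ) :: Gr⟩ ∧
        P' = (P \ {γ}) ∪
          {⟨H, c.conj (d.subst fi θ), Gl ++ (false, K.subst θ) :: Gr⟩}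

end CLPS

namespace CLPS

variable {F D Pu : Type}

/-! ### R7. Replacement based on laws -/

/-- The laws `Γ₁ ⇒ Γ₂` of rule R7: boolean laws (1)–(6), laws of constraints
(7)–(9), and the law of equality (10); for the laws stated as `Γ₁ ⇔ Γ₂` both
directions are included. -/
inductive Law (fi : F → List D → D) : Prog F Pu D → Prog F Pu D → Prop where
  /-- (1) `{H ← c ∧ A ∧ ¬A ∧ G} ⇔ ∅` -/
  | bool1l (H : Atm F Pu) (c : Constr D) (A : Atm F Pu) (G : Goal F Pu) :
      Law fi {⟨H, c, (true, A) :: (false, A) :: G⟩} ∅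
  | bool1r (H : Atm F Pu) (c : Constr D) (A : Atm F Pu) (G : Goal F Pu) :
      Law fi ∅ {⟨H, c, (true, A) :: (false, A) :: G⟩}
  /-- (2) `{H ← c ∧ H ∧ G} ⇔ ∅` -/
  | bool2l (H : Atm F Pu) (c : Constr D) (G : Goal F Pu) :
      Law fi {⟨H, c, (true, H) :: G⟩} ∅
  | bool2r (H : Atm F Pu) (c : Constr D) (G : Goal F Pu) :
      Law fi ∅ {⟨H, c, (true, H) :: G⟩}
  /-- (3) `{H ← c ∧ G₁ ∧ A₁ ∧ A₂ ∧ G₂} ⇔ {H ← c ∧ G₁ ∧ A₂ ∧ A₁ ∧ G₂}` -/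
  | bool3 (H : Atm F Pu) (c : Constr D) (G₁ G₂ : Goal F Pu) (A₁ A₂ : Atm F Pu) :
      Law fi {⟨H, c, G₁ ++ (true, A₁) :: (true, A₂) :: G₂⟩}
        {⟨H, c, G₁ ++ (true, A₂) :: (true, A₁) :: G₂⟩}
  /-- (4) `{H ← c ∧ A ∧ A ∧ G} ⇒ {H ← c ∧ A ∧ G}` (only this direction) -/
  | bool4 (H : Atm F Pu) (c : Constr D) (A : Atm F Pu) (G : Goal F Pu) :
      Law fi {⟨H, c, (true, A) :: (true, A) :: G⟩} {⟨H, c, (true, A) :: G⟩}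
  /-- (5) `{H ← c ∧ G₁, H ← c ∧ d ∧ G₁ ∧ G₂} ⇔ {H ← c ∧ G₁}` -/
  | bool5l (H : Atm F Pu) (c d : Constr D) (G₁ G₂ : Goal F Pu) :
      Law fi {⟨H, c, G₁⟩, ⟨H, c.conj d, G₁ ++ G₂⟩} {⟨H, c, G₁⟩}
  | bool5r (H : Atm F Pu) (c d : Constr D) (G₁ G₂ : Goal F Pu) :
      Law fi {⟨H, c, G₁⟩} {⟨H, c, G₁⟩, ⟨H, c.conj d, G₁ ++ G₂⟩}
  /-- (6) `{H ← c ∧ A ∧ G, H ← c ∧ ¬A ∧ G} ⇒ {H ← c ∧ G}` (only this direction) -/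
  | bool6 (H : Atm F Pu) (c : Constr D) (A : Atm F Pu) (G : Goal F Pu) :
      Law fi {⟨H, c, (true, A) :: G⟩, ⟨H, c, (false, A) :: G⟩} {⟨H, c, G⟩}
  /-- (7) `{H ← c ∧ G} ⇔ ∅` if `c` is unsatisfiable -/
  | constr7l (H : Atm F Pu) (c : Constr D) (G : Goal F Pu)
      (h : ∀ v : Vr → D, ¬ c.sat v) : Law fi {⟨H, c, G⟩} ∅
  | constr7r (H : Atm F Pu) (c : Constr D) (G : Goal F Pu)
      (h : ∀ v : Vr → D, ¬ c.sat v) : Law fi ∅ {⟨H, c, G⟩}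
  /-- (8) `{H ← c₁ ∧ G} ⇔ {H ← c₂ ∧ G}` if `𝒟 ⊨ ∀(∃Y c₁ ↔ ∃Z c₂)` where
  `Y = FV(c₁) − FV({H,G})` and `Z = FV(c₂) − FV({H,G})` -/
  | constr8 (H : Atm F Pu) (c₁ c₂ : Constr D) (G : Goal F Pu)
      (h : ∀ v : Vr → D,
        existsOverSat (c₁.fv \ (H.fv ∪ Goal.fv G)) c₁ v ↔
        existsOverSat (c₂.fv \ (H.fv ∪ Goal.fv G)) c₂ v) :
      Law fi {⟨H, c₁, G⟩} {⟨H, c₂, G⟩}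
  /-- (9) `{H ← c ∧ G} ⇔ {H ← c₁ ∧ G, H ← c₂ ∧ G}` if `𝒟 ⊨ ∀(c ↔ (c₁ ∨ c₂))` -/
  | constr9l (H : Atm F Pu) (c c₁ c₂ : Constr D) (G : Goal F Pu)
      (h : ∀ v : Vr → D, c.sat v ↔ (c₁.sat v ∨ c₂.sat v)) :
      Law fi {⟨H, c, G⟩} {⟨H, c₁, G⟩, ⟨H, c₂, G⟩}
  | constr9r (H : Atm F Pu) (c c₁ c₂ : Constr D) (G : Goal F Pu)
      (h : ∀ v : Vr → D, c.sat v ↔ (c₁.sat v ∨ c₂.sat v)) :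
      Law fi {⟨H, c₁, G⟩, ⟨H, c₂, G⟩} {⟨H, c, G⟩}
  /-- (10) `{(H ← c ∧ G){X/t}} ⇔ {H ← X = t ∧ c ∧ G}` if `X` does not occur in `t` -/
  | eq10l (H : Atm F Pu) (c : Constr D) (G : Goal F Pu) (X : Vr) (t : Trm F)
      (h : ¬ t.VarIn X) :
      Law fi {Clse.subst fi (singleSub X t) ⟨H, c, G⟩}
        {⟨H, (eqTrms fi [Trm.var X] [t]).conj c, G⟩}
  | eq10r (H : Atm F Pu) (c : Constr D) (G : Goal F Pu) (X : Vr) (t : Trm F)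
      (h : ¬ t.VarIn X) :
      Law fi {⟨H, (eqTrms fi [Trm.var X] [t]).conj c, G⟩}
        {Clse.subst fi (singleSub X t) ⟨H, c, G⟩}

/-- **Rule R7 (replacement based on laws).** `Γ₁` is replaced by `Γ₂`, where
`Γ₁ ⇒ Γ₂` is one of the laws and `Γ₂` is locally stratified w.r.t. the fixed `σ`. -/
def ReplaceStep (fi : F → List D → D) (σ : GrAtm Pu D → W)
    (Γ₁ Γ₂ : Prog F Pu D) (P P' : Prog F Pu D) : Prop :=
  Law fi Γ₁ Γ₂ ∧ progLS fi σ Γ₂ ∧ P' = (P \ Γ₁) ∪ Γ₂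

/-! ### R8. Deletion of useless predicates -/

/-- `U` is a set of useless predicates: each `p ∈ U` is such that every clause of
`Def(p, P)` has a positive body literal whose predicate is in `U`. -/
def UselessSet (P : Prog F Pu D) (U : Set Pu) : Prop :=
  (∀ q ∈ U, predInProg q P) ∧
  ∀ p ∈ U, ∀ γ ∈ DefOf p P, ∃ l ∈ γ.body, l.1 = true ∧ (l.2).pred ∈ U

/-- `p` belongs to the maximal set of useless predicates of `P` -/
def UselessPred (P : Prog F Pu D) (p : Pu) : Prop :=
  ∃ U, p ∈ U ∧ UselessSet P U

/-- **Rule R8 (deletion of useless predicates).** -/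
def UselessStep (p : Pu) (P P' : Prog F Pu D) : Prop :=
  UselessPred P p ∧ P' = P \ DefOf p P

/-! ### R9 and R10. Constraint addition and deletion -/

/-- **Rule R9 (constraint addition).** The clause `γ₁ : H ← c ∧ G ∈ Pₖ` is replaced
by `γ₂ : H ← c ∧ d ∧ G`, where `M(Pₖ) ⊨ ∀((c ∧ G) → ∃X d)` with
`X = FV(d) − FV(γ₁)`. -/
def CAddStep (fi : F → List D → D) (σ : GrAtm Pu D → W)
    (γ₁ γ₂ : Clse F Pu D) (P P' : Prog F Pu D) : Prop :=
  γ₁ ∈ P ∧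
  ∃ (H : Atm F Pu) (c d : Constr D) (G : Goal F Pu),
    γ₁ = ⟨H, c, G⟩ ∧ γ₂ = ⟨H, c.conj d, G⟩ ∧
    (∃ M : Set (GrAtm Pu D), PerfWrt fi σ P M ∧
      ∀ v : Vr → D, c.sat v → (∀ l ∈ G, litTrue M (glit fi v l)) →
        existsOverSat (d.fv \ γ₁.fv) d v) ∧
    P' = (P \ {γ₁}) ∪ {γ₂}

/-- **Rule R10 (constraint deletion).** The clause `γ₁ : H ← c ∧ d ∧ G ∈ Pₖ` is
replaced by `γ₂ : H ← c ∧ G`, where `M(Pₖ) ⊨ ∀((c ∧ G) → ∃X d)` with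
`X = FV(d) − FV(H ← c ∧ G)`, provided `γ₂` is locally stratified w.r.t. `σ`. -/
def CDelStep (fi : F → List D → D) (σ : GrAtm Pu D → W)
    (γ₁ γ₂ : Clse F Pu D) (P P' : Prog F Pu D) : Prop :=
  γ₁ ∈ P ∧
  ∃ (H : Atm F Pu) (c d : Constr D) (G : Goal F Pu),
    γ₁ = ⟨H, c.conj d, G⟩ ∧ γ₂ = ⟨H, c, G⟩ ∧
    (∃ M : Set (GrAtm Pu D), PerfWrt fi σ P M ∧
      ∀ v : Vr → D, c.sat v → (∀ l ∈ G, litTrue M (glit fi v l)) →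
        existsOverSat (d.fv \ γ₂.fv) d v) ∧
    clauseLS fi σ γ₂ ∧
    P' = (P \ {γ₁}) ∪ {γ₂}

end CLPS

namespace CLPS

variable {F D Pu : Type}

/-! ### Transformation sequences -/

/-- The record of which transformation rule, with which data, is applied at each
step of a transformation sequence. -/
inductive RuleApp (F Pu D : Type) where
  /-- R1, introducing the definition clauses `δs` -/
  | defIntro (δs : List (Clse F Pu D))
  /-- R2, eliminating the definition of `p` -/
  | defElim (p : Pu)
  /-- R3, positive unfolding of the clause `γ` -/
  | posUnfold (γ : Clse F Pu D)
  /-- R4, negative unfolding of the clause `γ` -/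
  | negUnfold (γ : Clse F Pu D)
  /-- R5, folding of the clauses `γs` using the definition clauses `δs` -/
  | posFold (γs δs : List (Clse F Pu D))
  /-- R6, folding of the clause `γ` using the definition clause `δ` -/
  | negFold (γ δ : Clse F Pu D)
  /-- R7, replacement of `Γ₁` by `Γ₂` -/
  | replace (Γ₁ Γ₂ : Prog F Pu D)
  /-- R8, deletion of the useless predicate `p` -/
  | useless (p : Pu)
  /-- R9, constraint addition turning `γ₁` into `γ₂` -/
  | cAdd (γ₁ γ₂ : Clse F Pu D)
  /-- R10, constraint deletion turning `γ₁` into `γ₂` -/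
  | cDel (γ₁ γ₂ : Clse F Pu D)

/-- `IsStep fi σ Pint prog defs k r` : program `prog (k+1)` is derived from
`prog k` by applying the transformation rule recorded by `r` (and `defs (k+1)` is
the set of definitions introduced so far). -/
def IsStep (fi : F → List D → D) (σ : GrAtm Pu D → W) (Pint : Set Pu)
    (prog defs : ℕ → Prog F Pu D) (k : ℕ) : RuleApp F Pu D → Prop
  | .defIntro δs =>
      DefIntroStep fi σ prog k (defs k) δs (prog k) (prog (k+1)) (defs (k+1))
  | .defElim p => DefElimStep Pint p (prog k) (prog (k+1)) ∧ defs (k+1) = defs k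
  | .posUnfold γ => PosUnfoldStep fi γ (prog k) (prog (k+1)) ∧ defs (k+1) = defs k
  | .negUnfold γ => NegUnfoldStep fi γ (prog k) (prog (k+1)) ∧ defs (k+1) = defs k
  | .posFold γs δs =>
      PosFoldStep fi (defs k) γs δs (prog k) (prog (k+1)) ∧ defs (k+1) = defs k
  | .negFold γ δ =>
      NegFoldStep fi (defs k) γ δ (prog k) (prog (k+1)) ∧ defs (k+1) = defs k
  | .replace Γ₁ Γ₂ =>
      ReplaceStep fi σ Γ₁ Γ₂ (prog k) (prog (k+1)) ∧ defs (k+1) = defs k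
  | .useless p => UselessStep p (prog k) (prog (k+1)) ∧ defs (k+1) = defs k
  | .cAdd γ₁ γ₂ => CAddStep fi σ γ₁ γ₂ (prog k) (prog (k+1)) ∧ defs (k+1) = defs k
  | .cDel γ₁ γ₂ => CDelStep fi σ γ₁ γ₂ (prog k) (prog (k+1)) ∧ defs (k+1) = defs k

/-- A transformation sequence `P₀, …, Pₙ` using the local stratification `σ`:
`prog k` is the program `Pₖ`, `defs k` is the set `Defsₖ` of clauses introduced by
the definition introduction rule during `P₀, …, Pₖ`, and `rule k` records the rule
applied to derive `P_{k+1}` from `Pₖ`. The initial program `P₀` is a finite set of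
clauses which is locally stratified w.r.t. `σ`. -/
structure TransfSeq (fi : F → List D → D) (σ : GrAtm Pu D → W) (Pint : Set Pu)
    (n : ℕ) where
  prog : ℕ → Prog F Pu D
  defs : ℕ → Prog F Pu D
  rule : ℕ → RuleApp F Pu D
  finite0 : (prog 0).Finite
  strat0 : progLS fi σ (prog 0)
  defs0 : defs 0 = ∅
  step : ∀ k < n, IsStep fi σ Pint prog defs k (rule k)

variable {fi : F → List D → D} {σ : GrAtm Pu D → W} {Pint : Set Pu} {n : ℕ}

/-- A transformation sequence is admissible iff (1) every clause used for positive
folding is positively unfolded at some earlier or later step `j` with `0 < j < n` at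
which it belongs to `P_j`, and (2) once the definition elimination rule is applied,
only definition elimination steps follow. -/
def TransfSeq.Admissible (S : TransfSeq fi σ Pint n) : Prop :=
  (∀ k < n, ∀ γs δs, S.rule k = .posFold γs δs →
    ∀ δ ∈ δs, ∃ j, 0 < j ∧ j < n ∧ δ ∈ S.prog j ∧ S.rule j = .posUnfold δ) ∧
  (∀ m < n, (∃ p, S.rule m = .defElim p) →
    ∀ k, m ≤ k → k < n → ∃ p, S.rule k = .defElim p)

/-- the definition clause `δ` is used for an application of the folding rule in
`P_j, …, P_m` -/
def TransfSeq.UsedForFolding (S : TransfSeq fi σ Pint n) (j m : ℕ)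
    (δ : Clse F Pu D) : Prop :=
  ∃ k, j ≤ k ∧ k < m ∧ ∃ γs δs, S.rule k = .posFold γs δs ∧ δ ∈ δs

/-- The transformation sequence is ordered, with intermediate indices
`i ≤ j ≤ m ≤ n`: (1) `P₀, …, Pᵢ` is constructed by `i` applications of the
definition introduction rule (so `Pᵢ = P₀ ∪ Defsᵢ`); (2) `Pᵢ, …, P_j` is
constructed by positive unfolding of exactly those clauses of `Defsᵢ` which are used
for applications of the folding rule in `P_j, …, Pₘ`; (3) `P_j, …, Pₘ` is
constructed by applying any rule except definition introduction and elimination;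
(4) `Pₘ, …, Pₙ` is constructed by applying the definition elimination rule. -/
def TransfSeq.OrderedAt (S : TransfSeq fi σ Pint n) (i j m : ℕ) : Prop :=
  i ≤ j ∧ j ≤ m ∧ m ≤ n ∧
  (∀ k < i, ∃ δs, S.rule k = .defIntro δs) ∧
  S.prog i = S.prog 0 ∪ S.defs i ∧
  (∀ k, i ≤ k → k < j →
    ∃ δ, S.rule k = .posUnfold δ ∧ δ ∈ S.defs i ∧ S.UsedForFolding j m δ) ∧
  (∀ δ ∈ S.defs i, S.UsedForFolding j m δ →
    ∃ k, i ≤ k ∧ k < j ∧ S.rule k = .posUnfold δ) ∧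
  (∀ k, j ≤ k → k < m →
    (∀ δs, S.rule k ≠ .defIntro δs) ∧ (∀ p, S.rule k ≠ .defElim p)) ∧
  (∀ k, m ≤ k → k < n → ∃ p, S.rule k = .defElim p)

/-- the transformation sequence is ordered -/
def TransfSeq.Ordered (S : TransfSeq fi σ Pint n) : Prop :=
  ∃ i j m, S.OrderedAt i j m

end CLPS

namespace CLPS

variable {F D Pu : Type}

/-! ### Proof trees -/

/-- Finite trees whose internal nodes are ground atoms; the children of a node are
either subtrees (corresponding to positive literals) or leaves labelled by a ground
atom `B` (corresponding to negative literals `¬B`). A node with the empty list of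
children is a node whose unique child is the empty conjunction `true`. -/
inductive PT (Pu D : Type) : Type where
  | node (A : GrAtm Pu D) (children : List (PT Pu D ⊕ GrAtm Pu D)) : PT Pu D

/-- the ground atom at the root of a tree -/
def PT.root : PT Pu D → GrAtm Pu D
  | .node A _ => A

/-- the ground literal corresponding to a child of a node of a tree -/
def childLit : PT Pu D ⊕ GrAtm Pu D → Bool × GrAtm Pu D
  | .inl t => (true, t.root)
  | .inr B => (false, B)

/-- Validity of a tree w.r.t. a program `P` and an "oracle" `O` for the negative
leaves: each node `A` with children `L₁,…,Lᵣ` must be obtained from a ground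
instance `A ← c ∧ L₁ ∧ … ∧ Lᵣ` (with `𝒟 ⊨ c`) of a clause of `P`, and every
negative leaf `¬B` must satisfy `O B`. -/
inductive PT.ValidW (fi : F → List D → D) (P : Prog F Pu D) (O : GrAtm Pu D → Prop) :
    PT Pu D → Prop where
  | node {A : GrAtm Pu D} {cs : List (PT Pu D ⊕ GrAtm Pu D)}
      (hc : ∃ γ ∈ P, ∃ v : Vr → D, γ.constr.sat v ∧ γ.head.eval fi v = A ∧
        γ.body.map (glit fi v) = cs.map childLit)
      (hpos : ∀ t, Sum.inl t ∈ cs → PT.ValidW fi P O t)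
      (hneg : ∀ B, Sum.inr B ∈ cs → O B) :
      PT.ValidW fi P O (.node A cs)

/-- `HasPTAux fi σ P α A` holds iff there is a proof tree for `A` and `P`, where a
negative leaf `¬B` is allowed only if there is no proof tree for `B` and `P` among
the proof trees for ground atoms of stratum `< α`. -/
def HasPTAux (fi : F → List D → D) (σ : GrAtm Pu D → W) (P : Prog F Pu D)
    (α : W) (A : GrAtm Pu D) : Prop :=
  ∃ T : PT Pu D, T.root = A ∧
    PT.ValidW fi P (fun B => ∀ _hlt : σ B < α, ¬ HasPTAux fi σ P (σ B) B) T
termination_by α.1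
decreasing_by exact _hlt

/-- there exists a proof tree for the ground atom `A` and the program `P` -/
def HasProofTree (fi : F → List D → D) (σ : GrAtm Pu D → W) (P : Prog F Pu D)
    (A : GrAtm Pu D) : Prop :=
  HasPTAux fi σ P (σ A) A

/-- `T` is a proof tree for the ground atom `A` and the program `P` -/
def IsProofTree (fi : F → List D → D) (σ : GrAtm Pu D → W) (P : Prog F Pu D)
    (A : GrAtm Pu D) (T : PT Pu D) : Prop :=
  T.root = A ∧
    PT.ValidW fi P (fun B => ∀ _hlt : σ B < σ A, ¬ HasPTAux fi σ P (σ B) B) T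

/-! ### The measure `μ` and `P_j`-consistency -/

mutual
  /-- `size(T)` : the number of atoms occurring at non-leaf nodes of `T` -/
  inductive PT.HasSize : PT Pu D → ℕ → Prop where
    | node {A cs n} : ChildrenSize cs n → PT.HasSize (.node A cs) (1 + n)
  /-- total size of the subtrees among a list of children -/
  inductive ChildrenSize : List (PT Pu D ⊕ GrAtm Pu D) → ℕ → Prop where
    | nil : ChildrenSize [] 0
    | inl {t cs n m} : PT.HasSize t n → ChildrenSize cs m →
        ChildrenSize (Sum.inl t :: cs) (n + m)
    | inr {B cs m} : ChildrenSize cs m → ChildrenSize (Sum.inr B :: cs) m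
end

/-- the (non-strict) lexicographic ordering `≤_lex` on `W × ℕ` -/
def wnLE (a b : W × ℕ) : Prop := a.1 < b.1 ∨ (a.1 = b.1 ∧ a.2 ≤ b.2)

/-- the strict lexicographic ordering `<_lex` on `W × ℕ` -/
def wnLT (a b : W × ℕ) : Prop := a.1 < b.1 ∨ (a.1 = b.1 ∧ a.2 < b.2)

/-- `⟨α₁,m₁⟩ ⊕ ⟨α₂,m₂⟩ = ⟨max(α₁,α₂), m₁+m₂⟩` -/
noncomputable def oplus (a b : W × ℕ) : W × ℕ := (max a.1 b.1, a.2 + b.2)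

/-- `μ(A,P) = min_lex {⟨σ(A), size(T)⟩ | T is a proof tree for A and P}`:
`muAtomIs fi σ P A m` states that `μ(A,P)` is defined and equal to `m`. -/
def muAtomIs (fi : F → List D → D) (σ : GrAtm Pu D → W) (P : Prog F Pu D)
    (A : GrAtm Pu D) (m : W × ℕ) : Prop :=
  (∃ (T : PT Pu D) (sz : ℕ), IsProofTree fi σ P A T ∧ T.HasSize sz ∧ m = (σ A, sz)) ∧
  (∀ (T : PT Pu D) (sz : ℕ), IsProofTree fi σ P A T → T.HasSize sz → wnLE m (σ A, sz))

/-- `μ` on ground literals: `μ(A,P)` for an atom, `⟨σ(A),0⟩` for `¬A` -/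
def muLitIs (fi : F → List D → D) (σ : GrAtm Pu D → W) (P : Prog F Pu D) :
    Bool × GrAtm Pu D → W × ℕ → Prop
  | (true, A), m => muAtomIs fi σ P A m
  | (false, A), m => m = (σ A, 0)

/-- `μ(L₁ ∧ … ∧ Lₙ, P) = μ(L₁,P) ⊕ … ⊕ μ(Lₙ,P)` -/
inductive muGoalIs (fi : F → List D → D) (σ : GrAtm Pu D → W) (P : Prog F Pu D) :
    List (Bool × GrAtm Pu D) → W × ℕ → Prop where
  | nil : muGoalIs fi σ P [] (zeroW, 0)
  | cons {l G m mg} : muLitIs fi σ P l m → muGoalIs fi σ P G mg →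
      muGoalIs fi σ P (l :: G) (oplus m mg)

/-- `T` is `P_j`-consistent: for every ground atom `B` which is the father of the
ground literals `L₁,…,Lᵣ` in `T`, `μ(B,P_j) > μ(L₁ ∧ … ∧ Lᵣ, P_j)`. -/
inductive PTConsistent (fi : F → List D → D) (σ : GrAtm Pu D → W)
    (Pj : Prog F Pu D) : PT Pu D → Prop where
  | node {A : GrAtm Pu D} {cs : List (PT Pu D ⊕ GrAtm Pu D)}
      (hmu : ∃ mA mG, muAtomIs fi σ Pj A mA ∧
        muGoalIs fi σ Pj (cs.map childLit) mG ∧ wnLT mG mA)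
      (hpos : ∀ t, Sum.inl t ∈ cs → PTConsistent fi σ Pj t) :
      PTConsistent fi σ Pj (.node A cs)

end CLPS

/-! Definition introduction chooses the strata of new predicates as least upper bounds and
positive unfolding only inserts bodies of clauses whose strata are bounded by the unfolded
atom, so `σ` still stratifies `P_j`. Take a proof tree `T` for `A` of least size. Each
subtree is again of least size for its root, for otherwise replacing it would shrink `T`.
At a node `B` with children `L₁,…,Lᵣ` the children have stratum at most `σ(B)` by
stratification, and the minimal sizes of the positive children add up to `size − 1`, so
`μ(L₁ ∧ … ∧ Lᵣ) <_lex ⟨σ(B), size⟩ = μ(B)`. -/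

namespace CLPS

variable {F D Pu : Type}

section Stratification

variable {fi : F → List D → D} {σ : GrAtm Pu D → W}

mutual
theorem Trm.eval_subst (s : Vr → Trm F) (v : Vr → D) :
    (t : Trm F) → (t.subst s).eval fi v = t.eval fi (fun x => (s x).eval fi v)
  | .var x => by rw [Trm.subst, Trm.eval]
  | .fn f ts => by
    rw [Trm.subst, Trm.eval, Trm.eval]
    simp only [List.map_attach_eq_pmap, List.pmap_eq_map, List.map_map]
    exact congrArg (fi f) (Trm.map_eval_subst s v ts)
theorem Trm.map_eval_subst (s : Vr → Trm F) (v : Vr → D) :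
    (ts : List (Trm F)) → ts.map (fun t => (t.subst s).eval fi v) =
      ts.map (Trm.eval fi (fun x => (s x).eval fi v))
  | [] => rfl
  | t :: ts => by
    rw [List.map_cons, List.map_cons, Trm.eval_subst s v t, Trm.map_eval_subst s v ts]
end

theorem Atm.eval_subst (s : Vr → Trm F) (v : Vr → D) (A : Atm F Pu) :
    (A.subst s).eval fi v = A.eval fi (fun x => (s x).eval fi v) := by
  simp only [Atm.subst, Atm.eval, List.map_map]
  exact congrArg _ (Trm.map_eval_subst s v A.args)

theorem clauseLS.subst {γ : Clse F Pu D} (h : clauseLS fi σ γ) (s : Vr → Trm F) :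
    clauseLS fi σ (γ.subst fi s) := by
  intro v hsat l hl
  obtain ⟨l₀, hl₀, rfl⟩ := List.mem_map.mp hl
  simpa [Clse.subst, Lit.subst, Atm.eval_subst] using h _ hsat l₀ hl₀

theorem clauseLS.unfold {H A : Atm F Pu} {c : Constr D} {Gl Gr : Goal F Pu}
    {δ : Clse F Pu D} (hγ : clauseLS fi σ ⟨H, c, Gl ++ (true, A) :: Gr⟩)
    (hδ : clauseLS fi σ δ) (hpred : δ.head.pred = A.pred) :
    clauseLS fi σ ⟨H, c.conj ((eqTrms fi A.args δ.head.args).conj δ.constr),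
      Gl ++ δ.body ++ Gr⟩ := by
  rintro v ⟨hc, heq, hd⟩ l hl
  have hγ' := hγ v hc
  have hhead : δ.head.eval fi v = A.eval fi v := by
    simp only [Atm.eval, hpred]
    exact congrArg _ heq.symm
  have hA : σ (A.eval fi v) ≤ σ (H.eval fi v) := (hγ' (true, A) (by simp)).1 rfl
  rcases List.mem_append.mp hl with hl | hl
  · rcases List.mem_append.mp hl with hl | hl
    · exact hγ' l (by simp [hl])
    · have hl' := hδ v hd l hl
      rw [hhead] at hl'
      exact ⟨fun h => (hl'.1 h).trans hA, fun h => (hl'.2 h).trans_le hA⟩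
  · exact hγ' l (by simp [hl])

theorem progLS_of_defIntroStep {hist : ℕ → Prog F Pu D} {k : ℕ}
    {Dk D' : Prog F Pu D} {δs : List (Clse F Pu D)} {P P' : Prog F Pu D}
    (h : DefIntroStep fi σ hist k Dk δs P P' D') (hP : progLS fi σ P) :
    progLS fi σ P' := by
  obtain ⟨-, ⟨newp, xs, -, hheads, -, -, -, hleast⟩, rfl, -⟩ := h
  rintro δ (hδ | hδ)
  · exact hP δ hδ
  · intro v hsat l hl
    rw [hheads δ hδ]
    exact (hleast v).1 v (fun _ _ => rfl) δ hδ hsat l hl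

theorem progLS_of_posUnfoldStep {γ : Clse F Pu D} {P P' : Prog F Pu D}
    (h : PosUnfoldStep fi γ P P') (hP : progLS fi σ P) : progLS fi σ P' := by
  obtain ⟨hγ, H, c, Gl, Gr, A, rfl, ρ, -, rfl⟩ := h
  rintro η (⟨hη, -⟩ | ⟨δ, hδ, hpred, -, rfl⟩)
  · exact hP η hη
  · exact (hP _ hγ).unfold ((hP δ hδ).subst _) hpred

theorem TransfSeq.progLS_prog {Pint : Set Pu} {n : ℕ} (S : TransfSeq fi σ Pint n)
    {i j m : ℕ} (hord : S.OrderedAt i j m) : progLS fi σ (S.prog j) := by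
  obtain ⟨-, hjm, hmn, hintro, -, hunf, -, -, -⟩ := hord
  suffices ∀ k ≤ j, progLS fi σ (S.prog k) from this j le_rfl
  intro k hk
  induction k with
  | zero => exact S.strat0
  | succ k ih =>
    have hstep := S.step k (by omega)
    have hPk := ih (by omega)
    by_cases hki : k < i
    · obtain ⟨δs, hrule⟩ := hintro k hki
      rw [hrule] at hstep
      exact progLS_of_defIntroStep hstep hPk
    · obtain ⟨δ, hrule, -⟩ := hunf k (by omega) (by omega)
      rw [hrule] at hstep
      exact progLS_of_posUnfoldStep hstep.1 hPk

end Stratification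

mutual
def PT.size : PT Pu D → ℕ
  | .node _ cs => 1 + PT.sizeChildren cs
def PT.sizeChildren : List (PT Pu D ⊕ GrAtm Pu D) → ℕ
  | [] => 0
  | .inl t :: cs => t.size + PT.sizeChildren cs
  | .inr _ :: cs => PT.sizeChildren cs
end

mutual
theorem PT.hasSize_size : (T : PT Pu D) → T.HasSize T.size
  | .node _ cs => .node (childrenSize_sizeChildren cs)
theorem childrenSize_sizeChildren :
    (cs : List (PT Pu D ⊕ GrAtm Pu D)) → ChildrenSize cs (PT.sizeChildren cs)
  | [] => .nil
  | .inl t :: cs => .inl t.hasSize_size (childrenSize_sizeChildren cs)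
  | .inr _ :: cs => .inr (childrenSize_sizeChildren cs)
end

mutual
theorem PT.HasSize.eq_size : {T : PT Pu D} → {k : ℕ} → T.HasSize k → k = T.size
  | _, _, .node h => by rw [PT.size, h.eq_sizeChildren]
theorem ChildrenSize.eq_sizeChildren :
    {cs : List (PT Pu D ⊕ GrAtm Pu D)} → {k : ℕ} → ChildrenSize cs k →
      k = PT.sizeChildren cs
  | _, _, .nil => rfl
  | _, _, .inl ht hcs => by rw [PT.sizeChildren, ht.eq_size, hcs.eq_sizeChildren]
  | _, _, .inr hcs => by rw [PT.sizeChildren, hcs.eq_sizeChildren]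
end

theorem PT.sizeChildren_append (a b : List (PT Pu D ⊕ GrAtm Pu D)) :
    PT.sizeChildren (a ++ b) = PT.sizeChildren a + PT.sizeChildren b := by
  induction a with
  | nil => simp [PT.sizeChildren]
  | cons c a ih => cases c <;> simp [PT.sizeChildren, ih, Nat.add_assoc]

theorem PT.size_node_append (A : GrAtm Pu D) (l₁ l₂ : List (PT Pu D ⊕ GrAtm Pu D))
    (t : PT Pu D) :
    (PT.node A (l₁ ++ .inl t :: l₂)).size =
      1 + PT.sizeChildren l₁ + t.size + PT.sizeChildren l₂ := by
  rw [PT.size, PT.sizeChildren_append, PT.sizeChildren]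
  omega

theorem PT.size_lt_size_node {A : GrAtm Pu D} {cs : List (PT Pu D ⊕ GrAtm Pu D)}
    {t : PT Pu D} (ht : .inl t ∈ cs) : t.size < (PT.node A cs).size := by
  obtain ⟨l₁, l₂, rfl⟩ := List.append_of_mem ht
  rw [PT.size_node_append]
  omega

theorem zeroW_le (β : W) : zeroW ≤ β := by
  show ((0 : ℕ) : Ordinal) ≤ β.1
  simp

theorem wnLE_mk_iff {a : W} {k l : ℕ} : wnLE (a, k) (a, l) ↔ k ≤ l := by
  simp [wnLE]

theorem wnLT_of_le_of_lt {a b : W × ℕ} (h₁ : a.1 ≤ b.1) (h₂ : a.2 < b.2) : wnLT a b :=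
  h₁.lt_or_eq.imp id (⟨·, h₂⟩)

section ProofTrees

variable {fi : F → List D → D} {σ : GrAtm Pu D → W} {P : Prog F Pu D}

def IsClauseInstance (fi : F → List D → D) (P : Prog F Pu D) (A : GrAtm Pu D)
    (Ls : List (Bool × GrAtm Pu D)) : Prop :=
  ∃ γ ∈ P, ∃ v : Vr → D,
    γ.constr.sat v ∧ γ.head.eval fi v = A ∧ γ.body.map (glit fi v) = Ls

theorem IsClauseInstance.stratum_le (hP : progLS fi σ P) {A : GrAtm Pu D}
    {Ls : List (Bool × GrAtm Pu D)} (h : IsClauseInstance fi P A Ls) {l : Bool × GrAtm Pu D}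
    (hl : l ∈ Ls) : (l.1 = true → σ l.2 ≤ σ A) ∧ (l.1 = false → σ l.2 < σ A) := by
  obtain ⟨γ, hγ, v, hsat, rfl, rfl⟩ := h
  obtain ⟨l₀, hl₀, rfl⟩ := List.mem_map.mp hl
  exact hP γ hγ v hsat l₀ hl₀

theorem IsClauseInstance.stratum_childLit_le (hP : progLS fi σ P) {A : GrAtm Pu D}
    {cs : List (PT Pu D ⊕ GrAtm Pu D)} (h : IsClauseInstance fi P A (cs.map childLit))
    {c : PT Pu D ⊕ GrAtm Pu D} (hc : c ∈ cs) : σ (childLit c).2 ≤ σ A := by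
  have hs := h.stratum_le hP (List.mem_map_of_mem hc)
  cases c
  exacts [hs.1 rfl, (hs.2 rfl).le]

/-- A negative leaf `¬B` only requires that `B` has no proof tree at all; for stratified
programs this agrees with the root-dependent condition in `IsProofTree`. -/
abbrev PT.Valid (fi : F → List D → D) (σ : GrAtm Pu D → W) (P : Prog F Pu D)
    (T : PT Pu D) : Prop :=
  T.ValidW fi P (fun B => ¬ HasProofTree fi σ P B)

theorem PT.ValidW.mono {O O' : GrAtm Pu D → Prop} (h : ∀ B, O B → O' B) {T : PT Pu D}
    (hT : T.ValidW fi P O) : T.ValidW fi P O' := by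
  induction hT with
  | node hc _ hneg ih => exact .node hc ih fun B hB => h B (hneg B hB)

theorem PT.ValidW.valid (hP : progLS fi σ P) {α : W} {T : PT Pu D}
    (hT : T.ValidW fi P (fun B => ∀ _ : σ B < α, ¬ HasPTAux fi σ P (σ B) B)) :
    σ T.root ≤ α → T.Valid fi σ P := by
  induction hT with
  | node hc _ hneg ih =>
    intro hα
    have hc' : IsClauseInstance fi P _ _ := hc
    refine .node hc (fun t ht => ih t ht ?_) (fun B hB => hneg B hB ?_)
    · exact ((hc'.stratum_le hP (List.mem_map_of_mem ht)).1 rfl).trans hα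
    · exact ((hc'.stratum_le hP (List.mem_map_of_mem hB)).2 rfl).trans_le hα

theorem isProofTree_iff (hP : progLS fi σ P) {A : GrAtm Pu D} {T : PT Pu D} :
    IsProofTree fi σ P A T ↔ T.root = A ∧ T.Valid fi σ P :=
  ⟨fun ⟨hr, hv⟩ => ⟨hr, hv.valid hP (congrArg σ hr).le⟩,
    fun ⟨hr, hv⟩ => ⟨hr, hv.mono fun B hB (_ : σ B < σ A) => hB⟩⟩

theorem hasProofTree_iff {A : GrAtm Pu D} :
    HasProofTree fi σ P A ↔ ∃ T, IsProofTree fi σ P A T := by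
  rw [HasProofTree, HasPTAux]
  rfl

theorem PT.ValidW.of_mem_children {O : GrAtm Pu D → Prop} {A : GrAtm Pu D}
    {cs : List (PT Pu D ⊕ GrAtm Pu D)} {t : PT Pu D} (h : (PT.node A cs).ValidW fi P O)
    (ht : .inl t ∈ cs) : t.ValidW fi P O := by
  cases h with
  | node _ hpos _ => exact hpos t ht

theorem PT.ValidW.replace_child {O : GrAtm Pu D → Prop} {A : GrAtm Pu D}
    {l₁ l₂ : List (PT Pu D ⊕ GrAtm Pu D)} {t t' : PT Pu D}
    (h : (PT.node A (l₁ ++ .inl t :: l₂)).ValidW fi P O) (ht' : t'.ValidW fi P O)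
    (hroot : t'.root = t.root) : (PT.node A (l₁ ++ .inl t' :: l₂)).ValidW fi P O := by
  cases h with
  | node hc hpos hneg =>
    have hlits :
        (l₁ ++ .inl t' :: l₂).map childLit = (l₁ ++ .inl t :: l₂).map childLit := by
      simp [childLit, hroot]
    refine .node (hlits ▸ hc) (fun s hs => ?_) (fun B hB => hneg B (by simpa using hB))
    simp only [List.mem_append, List.mem_cons, Sum.inl.injEq] at hs
    rcases hs with hs | rfl | hs
    · exact hpos s (by simp [hs])
    · exact ht'
    · exact hpos s (by simp [hs])

def IsMinProofTree (fi : F → List D → D) (σ : GrAtm Pu D → W) (P : Prog F Pu D)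
    (A : GrAtm Pu D) (T : PT Pu D) : Prop :=
  IsProofTree fi σ P A T ∧ ∀ T', IsProofTree fi σ P A T' → T.size ≤ T'.size

theorem exists_isMinProofTree {A : GrAtm Pu D} {T : PT Pu D}
    (hT : IsProofTree fi σ P A T) : ∃ T₀, IsMinProofTree fi σ P A T₀ := by
  set trees := {T | IsProofTree fi σ P A T}
  exact ⟨Function.argminOn PT.size trees ⟨T, hT⟩, Function.argminOn_mem PT.size trees _,
    fun _ hT' => Function.argminOn_le PT.size trees hT'⟩

theorem IsMinProofTree.muAtomIs {A : GrAtm Pu D} {T : PT Pu D}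
    (h : IsMinProofTree fi σ P A T) : muAtomIs fi σ P A (σ A, T.size) :=
  ⟨⟨T, T.size, h.1, T.hasSize_size, rfl⟩,
    fun T' _ hT' hsz => hsz.eq_size ▸ wnLE_mk_iff.2 (h.2 T' hT')⟩

theorem IsMinProofTree.of_mem_children (hP : progLS fi σ P) {A A' : GrAtm Pu D}
    {cs : List (PT Pu D ⊕ GrAtm Pu D)} {t : PT Pu D}
    (h : IsMinProofTree fi σ P A (.node A' cs)) (ht : .inl t ∈ cs) :
    IsMinProofTree fi σ P t.root t := by
  obtain ⟨l₁, l₂, rfl⟩ := List.append_of_mem ht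
  obtain ⟨hroot, hvalid⟩ := (isProofTree_iff hP).1 h.1
  refine ⟨(isProofTree_iff hP).2 ⟨rfl, hvalid.of_mem_children ht⟩, fun T' hT' => ?_⟩
  obtain ⟨hroot', hvalid'⟩ := (isProofTree_iff hP).1 hT'
  have hle := h.2 (.node A' (l₁ ++ .inl T' :: l₂))
    ((isProofTree_iff hP).2 ⟨hroot, hvalid.replace_child hvalid' hroot'⟩)
  rw [PT.size_node_append, PT.size_node_append] at hle
  omega

theorem exists_muGoalIs_childLit (hP : progLS fi σ P) {β : W} :
    ∀ {cs : List (PT Pu D ⊕ GrAtm Pu D)}, (∀ t, .inl t ∈ cs → t.Valid fi σ P) →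
      (∀ c ∈ cs, σ (childLit c).2 ≤ β) →
      ∃ mG, muGoalIs fi σ P (cs.map childLit) mG ∧ mG.1 ≤ β ∧ mG.2 ≤ PT.sizeChildren cs
  | [], _, _ => ⟨(zeroW, 0), .nil, zeroW_le β, le_rfl⟩
  | c :: cs, hval, hβ => by
    obtain ⟨mG, hmG, hmG₁, hmG₂⟩ :=
      exists_muGoalIs_childLit hP (fun t ht => hval t (.tail _ ht))
        (fun c' hc' => hβ c' (.tail _ hc'))
    have hc := hβ c (.head _)
    cases c with
    | inl t =>
      have ht : IsProofTree fi σ P t.root t := (isProofTree_iff hP).2 ⟨rfl, hval t (.head _)⟩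
      obtain ⟨T₀, hT₀⟩ := exists_isMinProofTree ht
      have hsz := hT₀.2 t ht
      refine ⟨oplus (σ t.root, T₀.size) mG, .cons hT₀.muAtomIs hmG, max_le hc hmG₁, ?_⟩
      simp only [oplus, PT.sizeChildren]
      omega
    | inr B =>
      exact ⟨oplus (σ B, 0) mG, .cons rfl hmG, max_le hc hmG₁,
        by simpa [oplus, PT.sizeChildren] using hmG₂⟩

theorem IsMinProofTree.ptConsistent (hP : progLS fi σ P) {A : GrAtm Pu D} {T : PT Pu D}
    (h : IsMinProofTree fi σ P A T) : PTConsistent fi σ P T := by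
  match T with
  | .node A' cs =>
    obtain ⟨rfl, hvalid⟩ := (isProofTree_iff hP).1 h.1
    cases hvalid with
    | node hc hpos _ =>
      have hc' : IsClauseInstance fi P _ _ := hc
      obtain ⟨mG, hmG, hmG₁, hmG₂⟩ :=
        exists_muGoalIs_childLit hP hpos fun c hc => hc'.stratum_childLit_le hP hc
      refine .node ⟨_, mG, h.muAtomIs, hmG, wnLT_of_le_of_lt hmG₁ ?_⟩ fun t ht => ?_
      · simp only [PT.size]
        omega
      · exact (h.of_mem_children hP ht).ptConsistent hP
termination_by T.size
decreasing_by exact PT.size_lt_size_node ht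

end ProofTrees

/-- Let `P₀,…,Pᵢ,…,P_j,…,Pₘ,…,Pₙ` be an ordered transformation
sequence. If there exists a proof tree for a ground atom `A` and `P_j`, then there
exists a `P_j`-consistent proof tree for `A` and `P_j`; in particular, every proof
tree `T` for `A` and `P_j` for which `⟨σ(A), size(T)⟩` is minimal w.r.t. the
lexicographic ordering is `P_j`-consistent. -/
theorem exists_Pj_consistent_proof_tree {F D Pu : Type}
    {fi : F → List D → D} {σ : GrAtm Pu D → W} {Pint : Set Pu} {n : ℕ}
    (S : TransfSeq fi σ Pint n) (i j m : ℕ) (hord : S.OrderedAt i j m)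
    (A : GrAtm Pu D) :
    (HasProofTree fi σ (S.prog j) A →
      ∃ T : PT Pu D, IsProofTree fi σ (S.prog j) A T ∧
        PTConsistent fi σ (S.prog j) T) ∧
    (∀ (T : PT Pu D) (sz : ℕ), IsProofTree fi σ (S.prog j) A T → T.HasSize sz →
      (∀ (T' : PT Pu D) (sz' : ℕ), IsProofTree fi σ (S.prog j) A T' →
        T'.HasSize sz' → wnLE (σ A, sz) (σ A, sz')) →
      PTConsistent fi σ (S.prog j) T) := by
  have hP := S.progLS_prog hord
  refine ⟨fun hA => ?_, fun T sz hT hsz hmin => ?_⟩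
  · obtain ⟨T, hT⟩ := hasProofTree_iff.1 hA
    obtain ⟨T₀, hT₀⟩ := exists_isMinProofTree hT
    exact ⟨T₀, hT₀.1, hT₀.ptConsistent hP⟩
  · refine IsMinProofTree.ptConsistent hP ⟨hT, fun T' hT' => ?_⟩
    rw [← hsz.eq_size]
    exact wnLE_mk_iff.1 (hmin T' _ hT' T'.hasSize_size)

end CLPS
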